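/- arXiv:1509.02050 — 3 statements merged into one kernel-verified Lean document; each statement's English description precedes it below -/
import Mathlib

section
/- Let 𝐤 be an algebraically closed field, 1 ≤ k ≤ n, and A_1, ..., A_k ⊆ ℤ^n finite sets each containing 0. If there is a non-empty subset J ⊆ {1,...,k} such that the ℚ-linear span of ⋃_{j∈J} A_j has dimension strictly less than |J|, then general Laurent polynomials f_1, ..., f_k with supports A_1, ..., A_k generate the unit ideal of R = 𝐤[x_1^{±1},...,x_n^{±1}]; equivalently, for general coefficients the system f_1 = ⋯ = f_k = 0 has no common solution in (𝐤^*)^n. -/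
open scoped BigOperators

noncomputable section

/-- The rational vector corresponding to an integer vector. -/
def ratVec {n : ℕ} (v : Fin n → ℤ) : Fin n → ℚ := fun i => (v i : ℚ)

/-- Dimension of the ℚ-linear span of a set of integer vectors. -/
def spanDim {n : ℕ} (S : Set (Fin n → ℤ)) : ℕ :=
  Module.finrank ℚ (Submodule.span ℚ (ratVec '' S))

/-- Coefficient index type for a family of supports. -/
abbrev CoeffIdx {n : ℕ} {ι : Type*} (A : ι → Finset (Fin n → ℤ)) : Type _ :=
  (j : ι) × {a // a ∈ A j}

/-- The Laurent polynomial (element of the group algebra of `ℤⁿ` over `𝕜`) with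
support `A j` and coefficients given by `c`. -/
def lpoly {𝕜 : Type*} [Field 𝕜] {n : ℕ} {ι : Type*} (A : ι → Finset (Fin n → ℤ))
    (c : CoeffIdx A → 𝕜) (j : ι) : AddMonoidAlgebra 𝕜 (Fin n → ℤ) :=
  ∑ a ∈ (A j).attach, AddMonoidAlgebra.single (a : Fin n → ℤ) (c ⟨j, a⟩)

/-- Evaluation of the `j`-th Laurent polynomial at a point of the torus `(𝕜ˣ)ⁿ`. -/
def evalAt {𝕜 : Type*} [Field 𝕜] {n : ℕ} {ι : Type*} (A : ι → Finset (Fin n → ℤ))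
    (c : CoeffIdx A → 𝕜) (x : Fin n → 𝕜ˣ) (j : ι) : 𝕜 :=
  ∑ a ∈ (A j).attach, c ⟨j, a⟩ * ((∏ i, x i ^ ((a : Fin n → ℤ) i) : 𝕜ˣ) : 𝕜)

/-- A property `P` of coefficient tuples holds *generically* on the torus `(𝕜ˣ)^σ`:
it holds on a nonempty Zariski-open (hence dense) subset of the torus. -/
def Generically {𝕜 : Type*} [Field 𝕜] {σ : Type*} [Fintype σ] (P : (σ → 𝕜) → Prop) : Prop :=
  ∃ q : MvPolynomial σ 𝕜,
    (∃ c : σ → 𝕜, (∀ s, c s ≠ 0) ∧ MvPolynomial.eval c q ≠ 0) ∧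
    ∀ c : σ → 𝕜, (∀ s, c s ≠ 0) → MvPolynomial.eval c q ≠ 0 → P c

/-!
Write `f_j = c_{j,0} - g_j`, where the tail `g_j` collects the non-constant terms and its
coefficients are treated as independent variables. For `j ∈ J` the tails are supported on
`S = ⋃_{j ∈ J} A_j`, whose `ℤ`-span has rank `d < |J|`, so the `N`-fold sumsets of `S ∪ {0}` have
`O(N^d)` points. The `(N + 1)^|J|` monomials of degree `≤ N` in each `g_j` therefore cannot be
linearly independent for large `N`: the tails satisfy a nonzero polynomial relation `P(g) = 0`
whose coefficients involve only the non-constant coefficient variables. Substituting `c_{j,0}` for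
`g_j` in `P` gives a nonzero polynomial `q` in all coefficients, and at any common zero of the
`f_j` (a `𝕜`-point of the Laurent ring) each `g_j` takes the value `c_{j,0}`, so `q(c) = 0`.
Where `q(c) ≠ 0` there is thus no common zero, and the Nullstellensatz makes the ideal the unit
ideal.
-/

open MvPolynomial
open scoped Pointwise

theorem Ideal.span_eq_top_of_forall_algHom_ne_zero {k A : Type*} [Field k] [IsAlgClosed k]
    [CommRing A] [Algebra k A] [Algebra.FiniteType k A] {s : Set A}
    (h : ∀ χ : A →ₐ[k] k, ∃ f ∈ s, χ f ≠ 0) : Ideal.span s = ⊤ := by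
  by_contra hs
  obtain ⟨m, hm, hsm⟩ := Ideal.exists_le_maximal _ hs
  let := Ideal.Quotient.field m
  -- Zariski's lemma: the residue field is finite, hence algebraic, over `k`.
  have := finite_of_finite_type_of_isJacobsonRing k (A ⧸ m)
  obtain ⟨f, hf, hχf⟩ := h ((IsAlgClosed.lift : A ⧸ m →ₐ[k] k).comp (Ideal.Quotient.mkₐ k m))
  exact hχf (by simp [Ideal.Quotient.eq_zero_iff_mem.mpr (hsm (Ideal.subset_span hf))])

section Torus

variable {𝕜 : Type*} [Field 𝕜] {n : ℕ}

def torusCharacter (x : Fin n → 𝕜ˣ) : Multiplicative (Fin n → ℤ) →* 𝕜 where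
  toFun a := ((∏ i, x i ^ a.toAdd i : 𝕜ˣ) : 𝕜)
  map_one' := by simp
  map_mul' a b := by simp [zpow_add, Finset.prod_mul_distrib]

def torusEval (x : Fin n → 𝕜ˣ) : AddMonoidAlgebra 𝕜 (Fin n → ℤ) →ₐ[𝕜] 𝕜 :=
  AddMonoidAlgebra.lift 𝕜 𝕜 (Fin n → ℤ) (torusCharacter x)

theorem torusEval_lpoly {ι : Type*} (A : ι → Finset (Fin n → ℤ)) (c : CoeffIdx A → 𝕜)
    (x : Fin n → 𝕜ˣ) (j : ι) : torusEval x (lpoly A c j) = evalAt A c x j := by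
  simp [lpoly, evalAt, torusEval, AddMonoidAlgebra.lift_single, torusCharacter]

end Torus

section Sumset

variable {M ι : Type*} [AddCommMonoid M] [DecidableEq M]

theorem Finset.abs_le_of_mem_nsmul (φ : M →+ (ι → ℤ)) {S : Finset M} {C : ℕ}
    (hC : ∀ s ∈ S, ∀ i, |φ s i| ≤ C) {N : ℕ} {v : M} (hv : v ∈ N • S) (i : ι) :
    |φ v i| ≤ N * C := by
  induction N generalizing v with
  | zero =>
    rw [zero_nsmul, Finset.mem_zero] at hv
    simp [hv]
  | succ N ih =>
    obtain ⟨u, hu, s, hs, rfl⟩ := Finset.mem_add.mp (succ_nsmul S N ▸ hv)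
    calc |φ (u + s) i| ≤ |φ u i| + |φ s i| := by simpa using abs_add_le (φ u i) (φ s i)
      _ ≤ N * C + C := add_le_add (ih hu) (hC s hs i)
      _ = (N + 1 : ℕ) * C := by push_cast; ring

theorem Finset.card_nsmul_le_of_injective [Fintype ι] [DecidableEq ι] (φ : M →+ (ι → ℤ))
    (hφ : Function.Injective φ) {S : Finset M} {C : ℕ} (hC : ∀ s ∈ S, ∀ i, |φ s i| ≤ C)
    (N : ℕ) : (N • S).card ≤ (2 * N * C + 1) ^ Fintype.card ι := by
  have hbox : ∀ v ∈ N • S,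
      φ v ∈ Fintype.piFinset fun _ : ι => Finset.Icc (-(N * C : ℤ)) (N * C) := fun v hv =>
    Fintype.mem_piFinset.mpr fun i => Finset.mem_Icc.mpr (abs_le.mp (abs_le_of_mem_nsmul φ hC hv i))
  calc (N • S).card ≤ (Fintype.piFinset fun _ : ι => Finset.Icc (-(N * C : ℤ)) (N * C)).card :=
        Finset.card_le_card_of_injOn φ hbox hφ.injOn
    _ = (2 * N * C + 1) ^ Fintype.card ι := by
        rw [Fintype.card_piFinset, Finset.prod_const, Int.card_Icc, Finset.card_univ]
        congr 1
        ring_nf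
        omega

end Sumset

theorem spanDim_insert_zero {n : ℕ} (S : Set (Fin n → ℤ)) : spanDim (insert 0 S) = spanDim S := by
  have : ratVec (0 : Fin n → ℤ) = 0 := funext fun _ => Int.cast_zero
  rw [spanDim, Set.image_insert_eq, this, Submodule.span_insert_zero, spanDim]

theorem finrank_span_int_le_spanDim {n : ℕ} (S : Set (Fin n → ℤ)) :
    Module.finrank ℤ (Submodule.span ℤ S) ≤ spanDim S := by
  let L := Submodule.span ℤ S
  let b := Module.Free.chooseBasis ℤ L
  let castLin : (Fin n → ℤ) →ₗ[ℤ] (Fin n → ℚ) :=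
    LinearMap.compLeft (Int.castAddHom ℚ).toIntLinearMap (Fin n)
  have hcast : Function.Injective castLin := fun u v huv =>
    funext fun i => by simpa [castLin] using congrFun huv i
  have hLQ : L.map castLin ≤ (Submodule.span ℚ (ratVec '' S)).restrictScalars ℤ := by
    rw [Submodule.map_span, Submodule.span_le]
    rintro _ ⟨v, hv, rfl⟩
    exact Submodule.subset_span ⟨v, hv, rfl⟩
  have hli : LinearIndependent ℚ fun i => (⟨ratVec (b i : Fin n → ℤ), hLQ ⟨b i, (b i).2, rfl⟩⟩ :
      Submodule.span ℚ (ratVec '' S)) := by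
    refine LinearIndependent.of_comp (Submodule.span ℚ (ratVec '' S)).subtype ?_
    refine (LinearIndependent.iff_fractionRing ℤ ℚ).mp ?_
    exact (b.linearIndependent.map' L.subtype (Submodule.ker_subtype L)).map'
      castLin (LinearMap.ker_eq_bot.mpr hcast)
  rw [Module.finrank_eq_card_chooseBasisIndex]
  exact hli.fintype_card_le_finrank

theorem exists_card_nsmul_le_pow_spanDim {n : ℕ} (S : Finset (Fin n → ℤ)) :
    ∃ C : ℕ, ∀ N : ℕ, (N • S).card ≤ (2 * N * C + 1) ^ spanDim (S : Set (Fin n → ℤ)) := by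
  classical
  let L := Submodule.span ℤ (S : Set (Fin n → ℤ))
  let b := Module.Free.chooseBasis ℤ L
  let SL : Finset L := S.subtype (· ∈ L)
  let C : ℕ := (SL ×ˢ Finset.univ).sup fun p => (b.equivFun p.1 p.2).natAbs
  have hC : ∀ s ∈ SL, ∀ i, |b.equivFun.toLinearMap.toAddMonoidHom s i| ≤ C := fun s hs i => by
    rw [Int.abs_eq_natAbs, Nat.cast_le]
    exact Finset.le_sup (f := fun p => (b.equivFun p.1 p.2).natAbs)
      (Finset.mk_mem_product hs (Finset.mem_univ i))
  have hS : SL.image L.subtype = S := by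
    rw [← Finset.subtype_map_of_mem (p := (· ∈ L)) fun v hv => Submodule.subset_span hv,
      Finset.map_eq_image]
    rfl
  refine ⟨C, fun N => ?_⟩
  calc (N • S).card = ((N • SL).image L.subtype).card := by
        rw [Finset.image_nsmul, hS]
    _ ≤ (N • SL).card := Finset.card_image_le
    _ ≤ (2 * N * C + 1) ^ Fintype.card (Module.Free.ChooseBasisIndex ℤ L) :=
        Finset.card_nsmul_le_of_injective _ b.equivFun.injective hC N
    _ ≤ (2 * N * C + 1) ^ spanDim (S : Set (Fin n → ℤ)) := by
        rw [← Module.finrank_eq_card_chooseBasisIndex]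
        exact Nat.pow_le_pow_right (Nat.succ_pos _) (finrank_span_int_le_spanDim _)

namespace AddMonoidAlgebra

theorem card_le_of_linearIndependent_of_mem_supported {R G : Type*} [CommSemiring R]
    [Nontrivial R] {κ : Type*} [Fintype κ]
    {v : κ → AddMonoidAlgebra R G} (hv : LinearIndependent R v) {T : Finset G}
    (hT : ∀ a, v a ∈ supported R R (T : Set G)) : Fintype.card κ ≤ T.card := by
  have hli : LinearIndependent R fun a => (⟨v a, hT a⟩ : supported R R (T : Set G)) :=
    LinearIndependent.of_comp (supported R R _).subtype hv
  have := (hli.map_injOn (supportedEquivFinsupp (R := R) (S := R) (T : Set G)).toLinearMap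
    (LinearEquiv.injective _).injOn).fintype_card_le_finrank
  simpa only [Module.finrank_finsupp_self, Finset.coe_sort_coe, Fintype.card_coe] using this

variable {R G : Type*} [CommSemiring R] [AddCommMonoid G] {s t : Set G}

theorem one_mem_supported_zero : (1 : AddMonoidAlgebra R G) ∈ supported R R 0 := by
  rw [mem_supported]
  exact_mod_cast support_coeff_one_subset (k := R) (G := G)

theorem mul_mem_supported {x y : AddMonoidAlgebra R G} (hx : x ∈ supported R R s)
    (hy : y ∈ supported R R t) : x * y ∈ supported R R (s + t) := by
  classical
  rw [mem_supported] at *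
  exact (Finset.coe_subset.mpr (support_coeff_mul_subset x y)).trans
    (by rw [Finset.coe_add]; exact Set.add_subset_add hx hy)

theorem pow_mem_supported {x : AddMonoidAlgebra R G} (hx : x ∈ supported R R s) (N : ℕ) :
    x ^ N ∈ supported R R (N • s) := by
  induction N with
  | zero => simpa using one_mem_supported_zero
  | succ N ih => simpa [pow_succ, succ_nsmul] using mul_mem_supported ih hx

theorem prod_pow_mem_supported {ι : Type*} (u : Finset ι) {x : ι → AddMonoidAlgebra R G}
    (hx : ∀ i ∈ u, x i ∈ supported R R s) (e : ι → ℕ) :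
    ∏ i ∈ u, x i ^ e i ∈ supported R R ((∑ i ∈ u, e i) • s) := by
  induction u using Finset.cons_induction with
  | empty => simpa using one_mem_supported_zero
  | cons a u ha ih =>
    rw [Finset.prod_cons, Finset.sum_cons, add_nsmul]
    exact mul_mem_supported (pow_mem_supported (hx a (Finset.mem_cons_self a u)) (e a))
      (ih fun i hi => hx i (Finset.mem_cons_of_mem hi))

theorem aeval_monomial_mem_supported {ι : Type*} {x : ι → AddMonoidAlgebra R G}
    (hx : ∀ i, x i ∈ supported R R s) (e : ι →₀ ℕ) :
    aeval x (monomial e (1 : R)) ∈ supported R R (e.degree • s) := by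
  rw [aeval_monomial, map_one, one_mul, Finsupp.prod, Finsupp.degree_apply]
  exact prod_pow_mem_supported _ (fun i _ => hx i) e

end AddMonoidAlgebra

theorem AlgebraicIndependent.linearIndependent_aeval_monomial {R A ι κ : Type*} [CommRing R]
    [CommRing A] [Algebra R A] {x : ι → A} (hx : AlgebraicIndependent R x) {e : κ → ι →₀ ℕ}
    (he : Function.Injective e) :
    LinearIndependent R fun a => aeval x (monomial (e a) (1 : R)) := by
  have := ((basisMonomials ι R).linearIndependent.comp e he).map_injOn
    (aeval x).toLinearMap hx.injOn
  simpa only [Function.comp_def, coe_basisMonomials, AlgHom.toLinearMap_apply] using this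

theorem not_algebraicIndependent_of_spanDim_lt {R : Type*} [CommRing R] [Nontrivial R] {n : ℕ}
    {ι : Type*} [Fintype ι] (S : Finset (Fin n → ℤ)) {G : ι → AddMonoidAlgebra R (Fin n → ℤ)}
    (hG : ∀ i, G i ∈ AddMonoidAlgebra.supported R R (S : Set (Fin n → ℤ)))
    (hS : spanDim (S : Set (Fin n → ℤ)) < Fintype.card ι) : ¬ AlgebraicIndependent R G := by
  classical
  intro hG_ind
  set m := Fintype.card ι
  set d := spanDim (S : Set (Fin n → ℤ))
  obtain ⟨C, hC⟩ := exists_card_nsmul_le_pow_spanDim (insert 0 S)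
  rw [Finset.coe_insert, spanDim_insert_zero] at hC
  set N := (2 * m * C + 1) ^ d
  have hN : 1 ≤ N := Nat.one_le_pow _ _ (Nat.succ_pos _)
  let expo : (ι → Fin (N + 1)) → ι →₀ ℕ := fun α => Finsupp.equivFunOnFinite.symm fun i => α i
  have hexpo : Function.Injective expo := fun α β h => funext fun i =>
    Fin.ext (congrFun (Finsupp.equivFunOnFinite.symm.injective h) i)
  have hmem : ∀ α, aeval G (monomial (expo α) (1 : R)) ∈
      AddMonoidAlgebra.supported R R (((m * N) • insert 0 S : Finset _) : Set (Fin n → ℤ)) := by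
    intro α
    refine AddMonoidAlgebra.supported_mono ?_ (AddMonoidAlgebra.aeval_monomial_mem_supported
      (fun i => AddMonoidAlgebra.supported_mono (Finset.subset_insert 0 S) (hG i)) _)
    rw [← Finset.coe_nsmul, Finset.coe_subset]
    refine Finset.nsmul_subset_nsmul_right (Finset.mem_insert_self 0 S) ?_
    calc (expo α).degree = ∑ i, (α i : ℕ) := Finsupp.degree_eq_sum _
      _ ≤ ∑ _i : ι, N := Finset.sum_le_sum fun i _ => Nat.le_of_lt_succ (α i).2
      _ = m * N := by simp [m]
  have hcard := AddMonoidAlgebra.card_le_of_linearIndependent_of_mem_supported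
    (hG_ind.linearIndependent_aeval_monomial hexpo) hmem
  rw [Fintype.card_fun, Fintype.card_fin] at hcard
  have hgrowth : (2 * (m * N) * C + 1) ^ d < (N + 1) ^ m :=
    calc (2 * (m * N) * C + 1) ^ d ≤ ((2 * m * C + 1) * N) ^ d :=
          Nat.pow_le_pow_left (by nlinarith) d
      _ = N ^ (d + 1) := by rw [mul_pow, pow_succ']
      _ ≤ N ^ m := Nat.pow_le_pow_right hN hS
      _ < (N + 1) ^ m := Nat.pow_lt_pow_left (Nat.lt_succ_self N) (by omega)
  exact absurd (hcard.trans (hC (m * N))) (not_le.mpr hgrowth)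

theorem generically_of_ne_zero {𝕜 σ : Type*} [Field 𝕜] [Infinite 𝕜] [Fintype σ]
    {P : (σ → 𝕜) → Prop} {q : MvPolynomial σ 𝕜} (hq : q ≠ 0)
    (h : ∀ c : σ → 𝕜, (∀ s, c s ≠ 0) → eval c q ≠ 0 → P c) : Generically P := by
  refine ⟨q, ?_, h⟩
  have hqX : q * ∏ s, X s ≠ 0 := mul_ne_zero hq (Finset.prod_ne_zero_iff.mpr fun s _ => X_ne_zero s)
  by_contra! hzero
  refine hqX (MvPolynomial.funext fun c => ?_)
  by_cases hc : ∀ s, c s ≠ 0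
  · simp [hzero c hc]
  · push Not at hc
    obtain ⟨s, hs⟩ := hc
    simp [Finset.prod_eq_zero (Finset.mem_univ s) hs]

theorem MvPolynomial.eval₂_rename_X_injective {R σ τ υ : Type*} [CommSemiring R] {f : σ → υ}
    {g : τ → υ} (h : Function.Injective (Sum.elim f g)) :
    Function.Injective (eval₂ (rename g : MvPolynomial τ R →ₐ[R] MvPolynomial υ R).toRingHom
      (X ∘ f)) := by
  have : eval₂ (rename g : MvPolynomial τ R →ₐ[R] MvPolynomial υ R).toRingHom (X ∘ f) =
      rename (Sum.elim f g) ∘ (sumAlgEquiv R σ τ).symm := by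
    funext p
    induction p using MvPolynomial.induction_on with
    | C b =>
      have hb : (sumAlgEquiv R σ τ).symm (C b) = rename Sum.inr b :=
        (AlgEquiv.symm_apply_eq _).mpr (AlgHom.congr_fun (sumAlgEquiv_comp_rename_inr R σ τ) b).symm
      simp [hb, rename_rename]
    | add p q hp hq => simp_all [eval₂_add]
    | mul_X p i hp => simp_all [eval₂_mul]
  rw [this]
  exact (rename_injective _ h).comp (sumAlgEquiv R σ τ).symm.injective

section Generic

variable {𝕜 : Type*} [Field 𝕜] {n : ℕ} {ι : Type*} (A : ι → Finset (Fin n → ℤ))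

abbrev NonconstCoeffIdx : Type _ := {s : CoeffIdx A // (s.2 : Fin n → ℤ) ≠ 0}

def tailVar (s : CoeffIdx A) : MvPolynomial (NonconstCoeffIdx A) 𝕜 :=
  if h : (s.2 : Fin n → ℤ) = 0 then 0 else X ⟨s, h⟩

def genericTail (j : ι) : AddMonoidAlgebra (MvPolynomial (NonconstCoeffIdx A) 𝕜) (Fin n → ℤ) :=
  ∑ a ∈ (A j).attach, AddMonoidAlgebra.single (a : Fin n → ℤ) (-tailVar A ⟨j, a⟩)

theorem genericTail_mem_supported (j : ι) :
    genericTail (𝕜 := 𝕜) A j ∈ AddMonoidAlgebra.supported (MvPolynomial (NonconstCoeffIdx A) 𝕜)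
      (MvPolynomial (NonconstCoeffIdx A) 𝕜) (A j : Set (Fin n → ℤ)) :=
  Submodule.sum_mem _ fun a _ => by
    rw [AddMonoidAlgebra.mem_supported, AddMonoidAlgebra.coeff_single]
    exact (Finset.coe_subset.mpr Finsupp.support_single_subset).trans (by simp)

theorem mapRingHom_eval_genericTail (h0 : ∀ j, (0 : Fin n → ℤ) ∈ A j) (c : CoeffIdx A → 𝕜)
    (j : ι) :
    AddMonoidAlgebra.mapRingHom _ (eval fun s : NonconstCoeffIdx A => c s) (genericTail A j) =
      AddMonoidAlgebra.single 0 (c ⟨j, ⟨0, h0 j⟩⟩) - lpoly A c j := by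
  rw [eq_sub_iff_add_eq, genericTail, lpoly, map_sum, ← Finset.sum_add_distrib,
    Finset.sum_eq_single_of_mem ⟨0, h0 j⟩ (Finset.mem_attach _ _)]
  · simp [tailVar]
  · intro a _ ha
    have : (a : Fin n → ℤ) ≠ 0 := fun h => ha (Subtype.ext h)
    simp [tailVar, this]

def substConstCoeff (h0 : ∀ j, (0 : Fin n → ℤ) ∈ A j) (J : Finset ι)
    (P : MvPolynomial J (MvPolynomial (NonconstCoeffIdx A) 𝕜)) : MvPolynomial (CoeffIdx A) 𝕜 :=
  eval₂ (rename Subtype.val : MvPolynomial (NonconstCoeffIdx A) 𝕜 →ₐ[𝕜] _).toRingHom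
    (fun j : J => X ⟨j, ⟨0, h0 j⟩⟩) P

theorem substConstCoeff_injective (h0 : ∀ j, (0 : Fin n → ℤ) ∈ A j) (J : Finset ι) :
    Function.Injective (substConstCoeff (𝕜 := 𝕜) A h0 J) := by
  refine MvPolynomial.eval₂_rename_X_injective (Function.Injective.sumElim ?_ Subtype.val_injective
    fun j s h => s.2 (congrArg (fun t : CoeffIdx A => (t.2 : Fin n → ℤ)) h).symm)
  intro j j' h
  exact Subtype.ext (congrArg Sigma.fst h)

theorem eval_substConstCoeff_eq_zero (h0 : ∀ j, (0 : Fin n → ℤ) ∈ A j) {J : Finset ι}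
    {P : MvPolynomial J (MvPolynomial (NonconstCoeffIdx A) 𝕜)}
    (hP : aeval (fun j : J => genericTail (𝕜 := 𝕜) A j) P = 0) (c : CoeffIdx A → 𝕜)
    (χ : AddMonoidAlgebra 𝕜 (Fin n → ℤ) →ₐ[𝕜] 𝕜) (hχ : ∀ j ∈ J, χ (lpoly A c j) = 0) :
    eval c (substConstCoeff A h0 J P) = 0 := by
  have hχ₀ : ∀ b, χ (AddMonoidAlgebra.single 0 b) = b := χ.commutes
  let φ : AddMonoidAlgebra (MvPolynomial (NonconstCoeffIdx A) 𝕜) (Fin n → ℤ) →+* 𝕜 :=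
    χ.toRingHom.comp (AddMonoidAlgebra.mapRingHom _ (eval fun s : NonconstCoeffIdx A => c s))
  have hφ : φ.comp (algebraMap _ _) = eval fun s : NonconstCoeffIdx A => c s := by
    ext b <;> simp [φ, hχ₀]
  have hφG : ∀ j : J, φ (genericTail A j) = c ⟨j, ⟨0, h0 j⟩⟩ := fun j => by
    simp [φ, mapRingHom_eval_genericTail A h0, hχ j j.2, hχ₀]
  calc eval c (substConstCoeff A h0 J P)
      = eval₂ (eval fun s : NonconstCoeffIdx A => c s) (fun j : J => c ⟨j, ⟨0, h0 j⟩⟩) P := by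
        rw [substConstCoeff, eval₂_comp_left]
        congr 1
        · ext <;> simp
        · funext j
          simp
    _ = φ (aeval (fun j : J => genericTail A j) P) := by
        rw [aeval_def, eval₂_comp_left, hφ]
        exact congrArg (eval₂ _ · P) (funext fun j => (hφG j).symm)
    _ = 0 := by rw [hP, map_zero]

end Generic

theorem general_unit_ideal_of_small_span_general {𝕜 : Type*} [Field 𝕜] [IsAlgClosed 𝕜]
    {n k : ℕ} (A : Fin k → Finset (Fin n → ℤ))
    (h0 : ∀ j, (0 : Fin n → ℤ) ∈ A j)
    (hJ : ∃ J : Finset (Fin k), J.Nonempty ∧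
      spanDim (⋃ j ∈ J, (A j : Set (Fin n → ℤ))) < J.card) :
    Generically (fun c : CoeffIdx A → 𝕜 =>
      Ideal.span (Set.range (lpoly A c)) = (⊤ : Ideal (AddMonoidAlgebra 𝕜 (Fin n → ℤ))) ∧
      ∀ x : Fin n → 𝕜ˣ, ∃ j, evalAt A c x j ≠ 0) := by
  obtain ⟨J, -, hJ⟩ := hJ
  obtain ⟨P, hP, hP0⟩ : ∃ P, aeval (fun j : J => genericTail (𝕜 := 𝕜) A j) P = 0 ∧ P ≠ 0 := by
    have := not_algebraicIndependent_of_spanDim_lt (J.biUnion A)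
      (G := fun j : J => genericTail (𝕜 := 𝕜) A j)
      (fun j => AddMonoidAlgebra.supported_mono
        (Finset.coe_subset.mpr (Finset.subset_biUnion_of_mem A j.2))
        (genericTail_mem_supported A j))
      (by simpa using hJ)
    simpa [algebraicIndependent_iff] using this
  refine generically_of_ne_zero (q := substConstCoeff A h0 J P)
    (((substConstCoeff_injective A h0 J).ne hP0).trans_eq (eval₂_zero _ _)) fun c _ hqc => ?_
  have hχ : ∀ χ : AddMonoidAlgebra 𝕜 (Fin n → ℤ) →ₐ[𝕜] 𝕜, ∃ j, χ (lpoly A c j) ≠ 0 := by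
    intro χ
    by_contra! hzero
    exact hqc (eval_substConstCoeff_eq_zero A h0 hP c χ fun j _ => hzero j)
  refine ⟨Ideal.span_eq_top_of_forall_algHom_ne_zero (k := 𝕜) fun χ => ?_, fun x => ?_⟩
  · obtain ⟨j, hj⟩ := hχ χ
    exact ⟨_, ⟨j, rfl⟩, hj⟩
  · obtain ⟨j, hj⟩ := hχ (torusEval x)
    exact ⟨j, torusEval_lpoly A c x j ▸ hj⟩

/-- The 'only if' direction of Lemma 2.1: if some nonempty subfamily of the supports
spans a ℚ-subspace of dimension less than its size, then general Laurent polynomials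
with these supports generate the unit ideal; equivalently, they have no common zero
in the torus. -/
theorem general_unit_ideal_of_small_span {𝕜 : Type*} [Field 𝕜] [IsAlgClosed 𝕜]
    {n k : ℕ} (hk : 1 ≤ k) (hkn : k ≤ n) (A : Fin k → Finset (Fin n → ℤ))
    (h0 : ∀ j, (0 : Fin n → ℤ) ∈ A j)
    (hJ : ∃ J : Finset (Fin k), J.Nonempty ∧
      spanDim (⋃ j ∈ J, (A j : Set (Fin n → ℤ))) < J.card) :
    Generically (fun c : CoeffIdx A → 𝕜 =>
      Ideal.span (Set.range (lpoly A c)) = (⊤ : Ideal (AddMonoidAlgebra 𝕜 (Fin n → ℤ))) ∧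
      ∀ x : Fin n → 𝕜ˣ, ∃ j, evalAt A c x j ≠ 0) :=
  general_unit_ideal_of_small_span_general A h0 hJ
end
end

section
/- Let A_1, ..., A_k be finite subsets of ℤ^n. Then the following two conditions are equivalent: (1) for every non-empty subset J ⊆ {1,...,k}, the dimension of the ℚ-linear span of ⋃_{j∈J} A_j is at least |J| + 1; (2) for every 1 ≤ j ≤ k, there exist v_1 ∈ A_1, ..., v_{j-1} ∈ A_{j-1} and u_1, u_2 ∈ A_j such that v_1, ..., v_{j-1}, u_1, u_2 are linearly independent over ℚ. -/
open scoped BigOperators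

noncomputable section

/-!
Condition (2) at index `j` asks for a linearly independent transversal of the family
`A₁, …, A_{j-1}, A_j, A_j`. By Rado's theorem for linear matroids such a transversal exists iff
any `m` members of the family span a space of dimension at least `m`; since the repeated `A_j`
costs at most one index, this is condition (1) for the set of indices the members use.
Conversely, (2) at `j = max J` yields `|J| + 1` independent vectors in the span of `⋃_{i ∈ J} A_i`.

Rado's theorem follows by induction on `∑ |B_i|`: if some `B_i` contains `x ≠ y`, then deleting
`x` or deleting `y` from `B_i` preserves Rado's condition, for otherwise the two violating
subfamilies `I ∋ i` and `J ∋ i` would give, by the modularity of dimension,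
`|I| + |J| - 1 ≤ dim(S ⊔ T) + dim(S ⊓ T) = dim S + dim T ≤ |I| + |J| - 2`.
-/

open Module Submodule Finset

theorem Finset.card_le_card_image_add_one {α β : Type*} [DecidableEq α] [DecidableEq β]
    {f : α → β} {a : α} (hf : Set.InjOn f {x | x ≠ a}) (s : Finset α) :
    #s ≤ #(s.image f) + 1 :=
  calc #s ≤ #(s.erase a) + 1 := Nat.sub_le_iff_le_add.mp pred_card_le_card_erase
    _ = #((s.erase a).image f) + 1 := by
      rw [card_image_of_injOn (hf.mono fun x hx => ne_of_mem_erase hx)]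
    _ ≤ #(s.image f) + 1 := by grw [erase_subset]

theorem Finset.biUnion_erase_subset_biUnion_update {ι α : Type*} [DecidableEq ι] [DecidableEq α]
    (I : Finset ι) (B : ι → Finset α) (i : ι) (s : Finset α) :
    (I.erase i).biUnion B ⊆ I.biUnion (Function.update B i s) := by
  intro a
  simp only [mem_biUnion, mem_erase]
  rintro ⟨c, ⟨hci, hc⟩, ha⟩
  exact ⟨c, hc, by rwa [Function.update_of_ne hci]⟩

theorem Finset.update_erase_subset {ι α : Type*} [DecidableEq ι] [DecidableEq α]
    (B : ι → Finset α) (i : ι) (x : α) (j : ι) :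
    Function.update B i ((B i).erase x) j ⊆ B j := by
  rcases eq_or_ne j i with rfl | h
  · simp [erase_subset]
  · simp [h]

section Rado

variable (K : Type*) {V ι : Type*} [DivisionRing K] [AddCommGroup V] [Module K V] [DecidableEq V]

def RadoCondition (B : ι → Finset V) : Prop :=
  ∀ I : Finset ι, #I ≤ finrank K (span K (I.biUnion B : Set V))

variable {K}

theorem RadoCondition.exists_linearIndependent_of_card_le_one [Fintype ι] {B : ι → Finset V}
    (hB : RadoCondition K B) (hB₁ : ∀ i, #(B i) ≤ 1) :
    ∃ f : ι → V, (∀ i, f i ∈ B i) ∧ LinearIndependent K f := by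
  have hne : ∀ i, (B i).Nonempty := fun i => by
    by_contra h
    simpa [not_nonempty_iff_eq_empty.mp h] using hB {i}
  choose f hf using hne
  have hBf : ∀ i, B i = {f i} := fun i =>
    eq_singleton_iff_unique_mem.mpr ⟨hf i, fun b hb => card_le_one.mp (hB₁ i) b hb _ (hf i)⟩
  refine ⟨f, hf, linearIndependent_iff_card_le_finrank_span.mpr ?_⟩
  have hrange : ((univ.biUnion B : Finset V) : Set V) = Set.range f := by
    ext; simp [hBf, eq_comm]
  rw [Set.finrank, ← hrange]
  simpa using hB univ

theorem RadoCondition.erase_or_erase [DecidableEq ι] {B : ι → Finset V} (hB : RadoCondition K B)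
    {i : ι} {x y : V} (hx : x ∈ B i) (hy : y ∈ B i) (hxy : x ≠ y) :
    RadoCondition K (Function.update B i ((B i).erase x)) ∨
      RadoCondition K (Function.update B i ((B i).erase y)) := by
  by_contra! h
  obtain ⟨hnx, hny⟩ := h
  simp only [RadoCondition, not_forall, not_le] at hnx hny
  obtain ⟨I, hI⟩ := hnx
  obtain ⟨J, hJ⟩ := hny
  have mem_of_lt : ∀ {s : Finset V} {I : Finset ι},
      finrank K (span K (I.biUnion (Function.update B i s) : Set V)) < #I → i ∈ I := by
    intro s I hlt
    by_contra hi
    have hle := (hB I).trans <| finrank_mono <| span_mono <| coe_subset.mpr <| by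
      simpa [erase_eq_of_notMem hi] using biUnion_erase_subset_biUnion_update I B i s
    omega
  have hiI := mem_of_lt hI
  have hiJ := mem_of_lt hJ
  set S := span K (I.biUnion (Function.update B i ((B i).erase x)) : Set V)
  set T := span K (J.biUnion (Function.update B i ((B i).erase y)) : Set V)
  have hsup : #(I ∪ J) ≤ finrank K ↥(S ⊔ T) := by
    refine (hB _).trans (finrank_mono ?_)
    rw [← span_union]
    refine span_mono fun a ha => ?_
    simp only [Set.mem_union, mem_coe, mem_biUnion, mem_union] at ha ⊢
    obtain ⟨c, hc, hac⟩ := ha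
    rcases eq_or_ne c i with rfl | hci
    · by_cases hax : a = x
      · subst hax
        exact .inr ⟨c, hiJ, by simpa [hxy] using hac⟩
      · exact .inl ⟨c, hiI, by simpa [hax] using hac⟩
    · rcases hc with hc | hc
      · exact .inl ⟨c, hc, by simpa [hci] using hac⟩
      · exact .inr ⟨c, hc, by simpa [hci] using hac⟩
  have hinf : #((I ∩ J).erase i) ≤ finrank K ↥(S ⊓ T) := by
    refine (hB _).trans (finrank_mono (le_inf (span_mono ?_) (span_mono ?_))) <;>
      refine coe_subset.mpr ((biUnion_subset_biUnion_of_subset_left _ ?_).trans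
        (biUnion_erase_subset_biUnion_update _ B i _))
    exacts [erase_subset_erase i inter_subset_left, erase_subset_erase i inter_subset_right]
  have hmod := finrank_sup_add_finrank_inf_eq S T
  have hcard := card_union_add_card_inter I J
  have herase := card_erase_add_one (mem_inter.mpr ⟨hiI, hiJ⟩)
  omega

theorem RadoCondition.exists_linearIndependent [Fintype ι] [DecidableEq ι] {B : ι → Finset V}
    (hB : RadoCondition K B) : ∃ f : ι → V, (∀ i, f i ∈ B i) ∧ LinearIndependent K f := by
  generalize hN : ∑ i, #(B i) = N
  induction N using Nat.strong_induction_on generalizing B with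
  | _ N IH =>
  by_cases hB₁ : ∀ i, #(B i) ≤ 1
  · exact hB.exists_linearIndependent_of_card_le_one hB₁
  push Not at hB₁
  obtain ⟨i, hi⟩ := hB₁
  obtain ⟨x, hx, y, hy, hxy⟩ := one_lt_card.mp hi
  have hsum : ∀ z ∈ B i, ∑ j, #(Function.update B i ((B i).erase z) j) < N := fun z hz =>
    hN ▸ sum_lt_sum (fun j _ => card_le_card (update_erase_subset B i z j))
      ⟨i, mem_univ _, by simpa using card_erase_lt_of_mem hz⟩
  have shrink : ∀ z ∈ B i, RadoCondition K (Function.update B i ((B i).erase z)) →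
      ∃ f : ι → V, (∀ i, f i ∈ B i) ∧ LinearIndependent K f := fun z hz hBz => by
    obtain ⟨f, hf, hli⟩ := IH _ (hsum z hz) hBz rfl
    exact ⟨f, fun j => update_erase_subset B i z j (hf j), hli⟩
  rcases hB.erase_or_erase hx hy hxy with h | h
  exacts [shrink x hx h, shrink y hy h]

end Rado

section DMIT

variable {K V : Type*} [DivisionRing K] [AddCommGroup V] [Module K V] [DecidableEq V] {k : ℕ}

theorem card_add_one_le_finrank_of_transversal (B : Fin k → Finset V)
    (h : ∀ j : Fin k, ∃ f : Fin j ⊕ Fin 2 → V, (∀ i : Fin j, f (.inl i) ∈ B ⟨i, i.2.trans j.2⟩) ∧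
      (∀ b, f (.inr b) ∈ B j) ∧ LinearIndependent K f)
    {J : Finset (Fin k)} (hJ : J.Nonempty) :
    #J + 1 ≤ finrank K (span K (J.biUnion B : Set V)) := by
  set m := J.max' hJ
  obtain ⟨f, hf_lt, hf_m, hli⟩ := h m
  have hlt : ∀ a ∈ J.erase m, a < m := fun a ha =>
    (J.le_max' a (mem_of_mem_erase ha)).lt_of_ne (ne_of_mem_erase ha)
  let e : (J.erase m) ⊕ Fin 2 → Fin m ⊕ Fin 2 := Sum.map (fun a => ⟨a.1, hlt a.1 a.2⟩) id
  have he : Function.Injective e :=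
    Function.Injective.sumMap (fun (a b : J.erase m) hab => Subtype.ext (Fin.ext (Fin.mk.inj hab)))
      Function.injective_id
  have hrange : Set.range (f ∘ e) ⊆ (J.biUnion B : Set V) := by
    rintro _ ⟨a | b, rfl⟩
    · exact mem_biUnion.mpr ⟨a.1, mem_of_mem_erase a.2, hf_lt _⟩
    · exact mem_biUnion.mpr ⟨m, J.max'_mem hJ, hf_m b⟩
  calc #J + 1 = Fintype.card ((J.erase m) ⊕ Fin 2) := by
        rw [Fintype.card_sum, Fintype.card_coe, card_erase_of_mem (J.max'_mem hJ), Fintype.card_fin]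
        have hpos := hJ.card_pos
        omega
    _ = finrank K (span K (Set.range (f ∘ e))) := (finrank_span_eq_card (hli.comp e he)).symm
    _ ≤ finrank K (span K (J.biUnion B : Set V)) := finrank_mono (span_mono hrange)

theorem exists_transversal_of_card_add_one_le_finrank (B : Fin k → Finset V)
    (h : ∀ J : Finset (Fin k), J.Nonempty → #J + 1 ≤ finrank K (span K (J.biUnion B : Set V)))
    (j : Fin k) :
    ∃ f : Fin j ⊕ Fin 2 → V, (∀ i : Fin j, f (.inl i) ∈ B ⟨i, i.2.trans j.2⟩) ∧
      (∀ b, f (.inr b) ∈ B j) ∧ LinearIndependent K f := by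
  let φ : Fin j ⊕ Fin 2 → Fin k := Sum.elim (fun i => ⟨i, i.2.trans j.2⟩) fun _ => j
  have hφ : Set.InjOn φ {s | s ≠ .inr 1} := by
    rintro (a | a) ha (b | b) hb hab <;> simp [φ, Fin.ext_iff] at ha hb hab ⊢ <;> omega
  have hrado : RadoCondition K (B ∘ φ) := by
    intro I
    rcases I.eq_empty_or_nonempty with rfl | hI
    · simp
    rw [show I.biUnion (B ∘ φ) = (I.image φ).biUnion B by rw [image_biUnion]; rfl]
    have hcard := card_le_card_image_add_one hφ I
    have hdim := h _ (hI.image φ)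
    omega
  obtain ⟨f, hf, hli⟩ := hrado.exists_linearIndependent
  exact ⟨f, fun i => hf (.inl i), fun b => hf (.inr b), hli⟩

theorem card_add_one_le_finrank_iff_exists_transversal (B : Fin k → Finset V) :
    (∀ J : Finset (Fin k), J.Nonempty → #J + 1 ≤ finrank K (span K (J.biUnion B : Set V))) ↔
    ∀ j : Fin k, ∃ f : Fin j ⊕ Fin 2 → V, (∀ i : Fin j, f (.inl i) ∈ B ⟨i, i.2.trans j.2⟩) ∧
      (∀ b, f (.inr b) ∈ B j) ∧ LinearIndependent K f :=
  ⟨exists_transversal_of_card_add_one_le_finrank B,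
    fun h _ => card_add_one_le_finrank_of_transversal B h⟩

end DMIT

theorem spanDim_iUnion {n : ℕ} {ι : Type*} (A : ι → Finset (Fin n → ℤ)) (J : Finset ι) :
    spanDim (⋃ j ∈ J, (A j : Set (Fin n → ℤ))) =
      finrank ℚ (span ℚ (J.biUnion (fun j => (A j).image ratVec) : Set (Fin n → ℚ))) := by
  have himage : ratVec '' ⋃ j ∈ J, (A j : Set (Fin n → ℤ)) =
      (J.biUnion (fun j => (A j).image ratVec) : Set (Fin n → ℚ)) := by
    simp [Set.image_iUnion₂]
  rw [spanDim, himage]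

theorem exists_ratVec_transversal_iff {n k : ℕ} (A : Fin k → Finset (Fin n → ℤ)) (j : Fin k) :
    (∃ f : Fin j ⊕ Fin 2 → (Fin n → ℚ),
      (∀ i : Fin j, f (.inl i) ∈ (A ⟨i, i.2.trans j.2⟩).image ratVec) ∧
      (∀ b, f (.inr b) ∈ (A j).image ratVec) ∧ LinearIndependent ℚ f) ↔
    ∃ v : Fin j.1 → (Fin n → ℤ), ∃ u₁ u₂ : Fin n → ℤ,
      (∀ i : Fin j.1, v i ∈ A ⟨i.1, i.2.trans j.2⟩) ∧ u₁ ∈ A j ∧ u₂ ∈ A j ∧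
      LinearIndependent ℚ (Sum.elim (fun i => ratVec (v i)) ![ratVec u₁, ratVec u₂]) := by
  constructor
  · rintro ⟨f, hf_lt, hf_j, hli⟩
    choose v hv hvf using fun i => mem_image.mp (hf_lt i)
    obtain ⟨u₁, hu₁, hu₁f⟩ := mem_image.mp (hf_j 0)
    obtain ⟨u₂, hu₂, hu₂f⟩ := mem_image.mp (hf_j 1)
    refine ⟨v, u₁, u₂, hv, hu₁, hu₂, ?_⟩
    convert hli using 1
    funext s
    rcases s with i | b
    · exact hvf i
    · fin_cases b
      exacts [hu₁f, hu₂f]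
  · rintro ⟨v, u₁, u₂, hv, hu₁, hu₂, hli⟩
    refine ⟨_, fun i => mem_image_of_mem _ (hv i), Fin.forall_fin_two.mpr ?_, hli⟩
    exact ⟨mem_image_of_mem _ hu₁, mem_image_of_mem _ hu₂⟩

/-- Lemma-Definition 2.2: the two formulations of the dragon marriage independent
transversal (DMIT) condition are equivalent. -/
theorem dmit_equivalence {n k : ℕ} (A : Fin k → Finset (Fin n → ℤ)) :
    (∀ J : Finset (Fin k), J.Nonempty →
      J.card + 1 ≤ spanDim (⋃ j ∈ J, (A j : Set (Fin n → ℤ)))) ↔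
    (∀ j : Fin k, ∃ v : Fin j.1 → (Fin n → ℤ), ∃ u₁ u₂ : Fin n → ℤ,
      (∀ i : Fin j.1, v i ∈ A ⟨i.1, i.2.trans j.2⟩) ∧ u₁ ∈ A j ∧ u₂ ∈ A j ∧
      LinearIndependent ℚ
        (Sum.elim (fun i => ratVec (v i)) ![ratVec u₁, ratVec u₂])) := by
  simp only [spanDim_iUnion, ← exists_ratVec_transversal_iff]
  exact card_add_one_le_finrank_iff_exists_transversal _
end
end

section
/- Let p be a prime and 𝐤 an algebraically closed field of characteristic p. Then for general (a,b,c,d,e,f) ∈ (𝐤^*)^6 (i.e., for all tuples in some nonempty Zariski open dense subset), the ideal generated by a·x^p + b·y^p + c·z and d·y^p + e·w^p + f·z in the Laurent polynomial ring 𝐤[x^{±1}, y^{±1}, z^{±1}, w^{±1}] is not prime. -/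
open scoped BigOperators

noncomputable section

/-!
Let `g₁ = a x^p + b y^p + c z` and `g₂ = d y^p + e w^p + f z`. In `f g₁ - c g₂` the variable `z`
cancels, leaving `f a x^p + (f b - c d) y^p - c e w^p`, which is `h^p` for the linear form
`h = α x + β y + γ w` with `α^p = f a`. If the ideal were prime it would contain `h`. But at a
point `(x₀, 1, z₀, w₀)` of the torus where `g₁` and `g₂` vanish, the tangent vector `∂/∂x` kills
both generators (their `x`-derivative is `p a x^{p-1} = 0`) while `∂h/∂x = α ≠ 0`. Concretely,
`x ↦ x₀ + ε` defines a map to the dual numbers vanishing on the ideal but not on `h`.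
-/

open AddMonoidAlgebra TrivSqZeroExt DualNumber

namespace AddMonoidAlgebra

variable {R S σ : Type*} [CommSemiring R] [CommSemiring S] [Algebra R S] [Fintype σ]

def evalTorus (u : σ → Sˣ) : AddMonoidAlgebra R (σ → ℤ) →ₐ[R] S :=
  lift R S (σ → ℤ)
    { toFun := fun v => ((∏ i, u i ^ v.toAdd i : Sˣ) : S)
      map_one' := by simp
      map_mul' := fun v w => by simp [zpow_add, Finset.prod_mul_distrib] }

theorem evalTorus_single (u : σ → Sˣ) (v : σ → ℤ) (t : R) :
    evalTorus u (single v t) = t • ((∏ i, u i ^ v i : Sˣ) : S) := by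
  simp [evalTorus, lift_single]

end AddMonoidAlgebra

theorem DualNumber.inl_add_eps_pow_char {K : Type*} [CommRing K] (p : ℕ) [Fact p.Prime]
    [CharP K p] (a : K) : (inl a + ε : DualNumber K) ^ p = inl (a ^ p) := by
  have : CharP (DualNumber K) p := charP_of_injective_ringHom (f := inlHom K K) inl_injective p
  obtain ⟨k, hk⟩ := Nat.exists_eq_add_of_le (Fact.out : p.Prime).two_le
  rw [add_pow_char, hk, pow_add ε, eps_pow_two, zero_mul, add_zero, inl_pow]

theorem Ideal.not_isPrime_of_pow_mem_of_map_ne_zero {A B : Type*} [CommSemiring A] [Semiring B]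
    {I : Ideal A} (φ : A →+* B) (hI : I ≤ RingHom.ker φ) {h : A} {n : ℕ} (hpow : h ^ n ∈ I)
    (hh : φ h ≠ 0) : ¬ I.IsPrime :=
  fun hP => hh (hI (hP.mem_of_pow_mem n hpow))

theorem exists_torus_point {𝕜 : Type*} [Field 𝕜] [IsAlgClosed 𝕜] {n : ℕ} (hn : 0 < n)
    {a b c d e f : 𝕜} (ha : a ≠ 0) (hc : c ≠ 0) (he : e ≠ 0) (hf : f ≠ 0) :
    ∃ x z w : 𝕜, x ≠ 0 ∧ z ≠ 0 ∧ w ≠ 0 ∧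
      a * x ^ n + b + c * z = 0 ∧ d + e * w ^ n + f * z = 0 := by
  classical
  obtain ⟨z, hz⟩ := Infinite.exists_notMem_finset ({0, -b / c, -d / f} : Finset 𝕜)
  simp only [Finset.mem_insert, Finset.mem_singleton, not_or] at hz
  obtain ⟨hz, hzb, hzd⟩ := hz
  have hbz : b + c * z ≠ 0 := fun h => hzb (by field_simp; linear_combination h)
  have hdz : d + f * z ≠ 0 := fun h => hzd (by field_simp; linear_combination h)
  obtain ⟨x, hx⟩ := IsAlgClosed.exists_pow_nat_eq (-(b + c * z) / a) hn
  obtain ⟨w, hw⟩ := IsAlgClosed.exists_pow_nat_eq (-(d + f * z) / e) hn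
  refine ⟨x, z, w, ne_zero_pow hn.ne' ?_, hz, ne_zero_pow hn.ne' ?_, ?_, ?_⟩
  · exact hx ▸ div_ne_zero (neg_ne_zero.mpr hbz) ha
  · exact hw ▸ div_ne_zero (neg_ne_zero.mpr hdz) he
  · rw [hx]; field_simp; ring
  · rw [hw]; field_simp; ring

section

variable {𝕜 : Type*} [Field 𝕜] {p : ℕ} [Fact p.Prime] [CharP 𝕜 p]

theorem linear_form_pow_char_eq_smul_sub_smul {a b c d e f α β γ : 𝕜} (hα : α ^ p = f * a)
    (hβ : β ^ p = f * b - c * d) (hγ : γ ^ p = -(c * e)) :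
    (single ![1, 0, 0, 0] α + single ![0, 1, 0, 0] β + single ![0, 0, 0, 1] γ :
        AddMonoidAlgebra 𝕜 (Fin 4 → ℤ)) ^ p =
      f • (single ![(p : ℤ), 0, 0, 0] a + single ![0, (p : ℤ), 0, 0] b + single ![0, 0, 1, 0] c) -
      c • (single ![0, (p : ℤ), 0, 0] d + single ![0, 0, 0, (p : ℤ)] e + single ![0, 0, 1, 0] f) := by
  have : CharP (AddMonoidAlgebra 𝕜 (Fin 4 → ℤ)) p := charP_of_injective_algebraMap' 𝕜 p
  simp only [add_pow_char, single_pow, hα, hβ, hγ, smul_add, smul_single', single_sub, single_neg,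
    Matrix.smul_cons, smul_zero, nsmul_eq_mul, mul_one, Matrix.smul_empty, mul_comm c f]
  abel

theorem not_isPrime_of_pth_power_cancellation [IsAlgClosed 𝕜] {a b c d e f : 𝕜} (ha : a ≠ 0)
    (hc : c ≠ 0) (he : e ≠ 0) (hf : f ≠ 0) :
    ¬ (Ideal.span {single ![(p : ℤ), 0, 0, 0] a + single ![0, (p : ℤ), 0, 0] b +
        single ![0, 0, 1, 0] c, single ![0, (p : ℤ), 0, 0] d + single ![0, 0, 0, (p : ℤ)] e +
        single ![0, 0, 1, 0] f} : Ideal (AddMonoidAlgebra 𝕜 (Fin 4 → ℤ))).IsPrime := by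
  have hp : 0 < p := (Fact.out : p.Prime).pos
  obtain ⟨α, hα⟩ := IsAlgClosed.exists_pow_nat_eq (f * a) hp
  obtain ⟨β, hβ⟩ := IsAlgClosed.exists_pow_nat_eq (f * b - c * d) hp
  obtain ⟨γ, hγ⟩ := IsAlgClosed.exists_pow_nat_eq (-(c * e)) hp
  obtain ⟨x, z, w, hx, hz, hw, h₁, h₂⟩ := exists_torus_point (b := b) (d := d) hp ha hc he hf
  have hX : IsUnit (inl x + ε : DualNumber 𝕜) := isUnit_iff_isUnit_fst.mpr (by simpa using hx)
  have hZ : IsUnit (inl z : DualNumber 𝕜) := isUnit_inl_iff.mpr hz.isUnit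
  have hW : IsUnit (inl w : DualNumber 𝕜) := isUnit_inl_iff.mpr hw.isUnit
  set φ := evalTorus (R := 𝕜) ![hX.unit, 1, hZ.unit, hW.unit]
  refine Ideal.not_isPrime_of_pow_mem_of_map_ne_zero φ.toRingHom ?_
    (linear_form_pow_char_eq_smul_sub_smul hα hβ hγ ▸
      sub_mem (Submodule.smul_of_tower_mem _ _ (Ideal.subset_span (by simp)))
        (Submodule.smul_of_tower_mem _ _ (Ideal.subset_span (by simp)))) ?_
  · rw [Ideal.span_le, Set.insert_subset_iff, Set.singleton_subset_iff]
    constructor <;> ext <;>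
      simp [φ, evalTorus_single, Fin.prod_univ_four, inl_add_eps_pow_char, h₁, h₂]
  · intro h
    have hα0 : α = 0 := by simpa [φ, evalTorus_single, Fin.prod_univ_four] using congrArg snd h
    exact mul_ne_zero hf ha (by rw [← hα, hα0, zero_pow hp.ne'])

end

/-- Example (5') of the Introduction: over an algebraically closed field `𝕜` of
characteristic `p > 0`, for general `(a,b,c,d,e,f) ∈ (𝕜*)⁶` the ideal generated by
`a·x^p + b·y^p + c·z` and `d·y^p + e·w^p + f·z` in the Laurent polynomial ring
`𝕜[x^{±1}, y^{±1}, z^{±1}, w^{±1}]` is not prime. -/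
theorem pth_power_after_cancellation_not_prime {p : ℕ} (hp : p.Prime)
    {𝕜 : Type*} [Field 𝕜] [IsAlgClosed 𝕜] [CharP 𝕜 p] :
    Generically (fun c : Fin 6 → 𝕜 =>
      ¬ (Ideal.span ({AddMonoidAlgebra.single ![(p : ℤ), 0, 0, 0] (c 0) +
            AddMonoidAlgebra.single ![0, (p : ℤ), 0, 0] (c 1) +
            AddMonoidAlgebra.single ![0, 0, 1, 0] (c 2),
          AddMonoidAlgebra.single ![0, (p : ℤ), 0, 0] (c 3) +
            AddMonoidAlgebra.single ![0, 0, 0, (p : ℤ)] (c 4) +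
            AddMonoidAlgebra.single ![0, 0, 1, 0] (c 5)} :
        Set (AddMonoidAlgebra 𝕜 (Fin 4 → ℤ)))).IsPrime) := by
  have : Fact p.Prime := ⟨hp⟩
  exact ⟨1, ⟨fun _ => 1, fun _ => one_ne_zero, by simp⟩,
    fun c hc _ => not_isPrime_of_pth_power_cancellation (hc 0) (hc 2) (hc 4) (hc 5)⟩
end
end
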